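/- arXiv:2408.02848 — 3 statements merged into one kernel-verified Lean document; each statement's English description precedes it below -/
import Mathlib

section
/- Let a, d ≥ 0 be integers, n = a+d+1, and R = ℤ[z_1,…,z_a, y, x_1,…,x_d]. Let M = D_X(Λ(a,1,0,d)) be the n×n matrix over R with rows and columns indexed by K ⊔ {•} ⊔ T (|K| = a, |T| = d): diagonal entries z_1,…,z_a on K, y at •, and x_1,…,x_d on T; off-diagonal entries: 1 between two distinct K-indices, 1 from a K-index to •, 2 from a K-index to a T-index, 2 from • to every K-index, 1 from • to every T-index, 1 from a T-index to every K-index, 1 from a T-index to •, and 2 between two distinct T-indices. Let L be the n×n matrix over R with rows and columns indexed by {•} ⊔ K ⊔ T, with entries: L(•,•) = y, L(•,k) = 2 − y for every k ∈ K, L(•,t) = 1 − 2y for every t ∈ T; for k ∈ K: L(k,•) = 1, L(k,k) = z_k − 1, and all other entries in row k are 0; for t ∈ T: L(t,•) = 1, L(t,t) = x_t − 2, and all other entries in row t are 0. Then for every 1 ≤ j ≤ n, the ideal of R generated by the determinants of all j×j submatrices of M equals the ideal generated by the determinants of all j×j submatrices of L. -/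
open MvPolynomial

def minorsIdeal {R : Type*} [CommRing R] {m : Type*} (M : Matrix m m R) (k : ℕ) : Ideal R :=
  Ideal.span { p | ∃ (r c : Fin k → m), Function.Injective r ∧ Function.Injective c ∧
    p = (M.submatrix r c).det }

section Aux

variable {R : Type*} [CommRing R] {n : Type*} [Fintype n] [DecidableEq n]

lemma minorsIdeal_mul_transvection_le (M : Matrix n n R) (p q : n) (c : R) (j : ℕ) :
    minorsIdeal (M * Matrix.transvection p q c) j ≤ minorsIdeal M j := by
  rw [minorsIdeal, Ideal.span_le]
  rintro x ⟨r, c0, hr, hc0, rfl⟩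
  by_cases hq : ∃ l, c0 l = q
  · obtain ⟨l, hl⟩ := hq
    have hN : (M * Matrix.transvection p q c).submatrix r c0 =
        (M.submatrix r c0).updateCol l (fun i => M (r i) q + c * M (r i) p) := by
      ext i l'
      by_cases h : l' = l
      · subst h
        simp [Matrix.updateCol_apply, Matrix.submatrix_apply, hl]
      · have hne : c0 l' ≠ q := fun hc => h (hc0 (hc.trans hl.symm))
        simp only [Matrix.submatrix_apply, Matrix.updateCol_apply, if_neg h,
          Matrix.mul_transvection_apply_of_ne p q _ _ hne]
    rw [hN]
    have hdet : ((M.submatrix r c0).updateCol l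
          (fun i => M (r i) q + c * M (r i) p)).det
        = (M.submatrix r c0).det + c * (M.submatrix r (Function.update c0 l p)).det := by
      have h1 : (fun i => M (r i) q + c * M (r i) p)
          = (fun i => M (r i) q) + c • (fun i => M (r i) p) := by
        funext i; simp [mul_comm]
      rw [h1, Matrix.det_updateCol_add, Matrix.det_updateCol_smul]
      congr 1
      · congr 1
        ext i l'
        by_cases h : l' = l
        · subst h; simp [Matrix.updateCol_apply, hl]
        · simp [Matrix.updateCol_apply, h]
      · congr 2
        ext i l'
        by_cases h : l' = l
        · subst h; simp [Matrix.updateCol_apply]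
        · simp [Matrix.updateCol_apply, h, Function.update_of_ne h]
    rw [hdet]
    by_cases hex : ∃ l', l' ≠ l ∧ c0 l' = p
    · obtain ⟨l', hl'ne, hl'⟩ := hex
      have hzero : (M.submatrix r (Function.update c0 l p)).det = 0 := by
        apply Matrix.det_zero_of_column_eq hl'ne.symm
        intro k
        simp [Matrix.submatrix_apply, Function.update_self, Function.update_of_ne hl'ne, hl']
      rw [hzero, mul_zero, add_zero]
      exact Ideal.subset_span ⟨r, c0, hr, hc0, rfl⟩
    · push_neg at hex
      have hinj : Function.Injective (Function.update c0 l p) := by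
        intro u v huv
        by_cases hu : u = l <;> by_cases hv : v = l
        · exact hu.trans hv.symm
        · exfalso
          rw [hu, Function.update_self, Function.update_of_ne hv] at huv
          exact hex v hv huv.symm
        · exfalso
          rw [hv, Function.update_self, Function.update_of_ne hu] at huv
          exact hex u hu huv
        · rw [Function.update_of_ne hu, Function.update_of_ne hv] at huv
          exact hc0 huv
      exact add_mem (Ideal.subset_span ⟨r, c0, hr, hc0, rfl⟩)
        (Ideal.mul_mem_left _ _ (Ideal.subset_span ⟨r, _, hr, hinj, rfl⟩))
  · push_neg at hq
    have : (M * Matrix.transvection p q c).submatrix r c0 = M.submatrix r c0 := by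
      ext i l
      simp only [Matrix.submatrix_apply, Matrix.mul_transvection_apply_of_ne p q _ _ (hq l)]
    rw [this]
    exact Ideal.subset_span ⟨r, c0, hr, hc0, rfl⟩

/-- `Cmat b g = 1 + e_b gᵀ` where `g b = 0`. -/
def Cmat (b : n) (g : n → R) : Matrix n n R :=
  Matrix.of fun i j => (if i = j then 1 else 0) + (if i = b then g j else 0)

lemma Cmat_zero (b : n) : Cmat b (0 : n → R) = 1 := by
  ext i j
  simp [Cmat, Matrix.one_apply]

lemma Cmat_mul_transvection (b q : n) (hq : q ≠ b) (g : n → R) (hgb : g b = 0) (c : R) :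
    Cmat b g * Matrix.transvection b q c = Cmat b (Function.update g q (g q + c)) := by
  ext i j
  by_cases hj : j = q
  · subst hj
    rw [Matrix.mul_transvection_apply_same]
    simp [Cmat, hgb, Function.update_self]
    by_cases hib : i = b
    · subst hib; simp [Ne.symm hq, hgb]; try ring
    · simp [hib]
  · rw [Matrix.mul_transvection_apply_of_ne b q i j hj c]
    simp [Cmat, Function.update_of_ne hj]

lemma mul_Cmat_apply (M : Matrix n n R) (b : n) (g : n → R) (i j : n) :
    (M * Cmat b g) i j = M i j + g j * M i b := by
  simp only [Matrix.mul_apply, Cmat, Matrix.of_apply, mul_add]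
  rw [Finset.sum_add_distrib]
  congr 1
  · simp [mul_ite, Finset.sum_ite_eq' Finset.univ j]
  · simp [mul_ite, Finset.sum_ite_eq' Finset.univ b, mul_comm]

lemma minorsIdeal_mul_Cmat_le (M : Matrix n n R) (b : n) (g : n → R) (hgb : g b = 0)
    (j : ℕ) : minorsIdeal (M * Cmat b g) j ≤ minorsIdeal M j := by
  classical
  have key : ∀ s : Finset n, ∀ g : n → R, g b = 0 → (∀ q ∉ s, g q = 0) →
      minorsIdeal (M * Cmat b g) j ≤ minorsIdeal M j := by
    intro s
    induction s using Finset.induction with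
    | empty =>
      intro g hgb hsup
      have : g = 0 := funext fun q => hsup q (by simp)
      rw [this, Cmat_zero, mul_one]
    | @insert q s hq ih =>
      intro g hgb hsup
      by_cases hqb : q = b
      · exact ih g hgb (fun r hr => if h : r = q then (h ▸ hqb ▸ hgb) else
          hsup r (by simp [hr, h]))
      · set g' := Function.update g q 0 with hg'
        have hg'b : g' b = 0 := by
          rw [hg', Function.update_of_ne (Ne.symm hqb)]; exact hgb
        have hg'sup : ∀ r ∉ s, g' r = 0 := by
          intro r hr
          by_cases h : r = q
          · subst h; simp [hg']
          · rw [hg', Function.update_of_ne h]; exact hsup r (by simp [hr, h])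
        have hrw : Cmat b g = Cmat b g' * Matrix.transvection b q (g q) := by
          rw [Cmat_mul_transvection b q hqb g' hg'b]
          congr 1
          funext r
          by_cases h : r = q
          · subst h; simp [hg']
          · simp [hg', Function.update_of_ne h]
        calc minorsIdeal (M * Cmat b g) j
            = minorsIdeal ((M * Cmat b g') * Matrix.transvection b q (g q)) j := by
              rw [hrw, Matrix.mul_assoc]
          _ ≤ minorsIdeal (M * Cmat b g') j := minorsIdeal_mul_transvection_le _ _ _ _ _
          _ ≤ minorsIdeal M j := ih g' hg'b hg'sup
  exact key Finset.univ g hgb (fun q hq => absurd (Finset.mem_univ q) hq)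

lemma Cmat_mul_Cmat (b : n) (g g' : n → R) (hgb : g b = 0) (hg'b : g' b = 0) :
    Cmat b g * Cmat b g' = Cmat b (g + g') := by
  ext i j
  rw [mul_Cmat_apply]
  simp only [Cmat, Matrix.of_apply, Pi.add_apply]
  by_cases hib : i = b
  · subst hib; simp [hgb]; ring
  · simp [hib]

lemma minorsIdeal_mul_Cmat (M : Matrix n n R) (b : n) (g : n → R) (hgb : g b = 0)
    (j : ℕ) : minorsIdeal (M * Cmat b g) j = minorsIdeal M j := by
  refine le_antisymm (minorsIdeal_mul_Cmat_le M b g hgb j) ?_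
  have : M = (M * Cmat b g) * Cmat b (-g) := by
    rw [Matrix.mul_assoc, Cmat_mul_Cmat b g (-g) hgb (by simp [hgb]), add_neg_cancel,
      Cmat_zero, mul_one]
  conv_lhs => rw [this]
  exact minorsIdeal_mul_Cmat_le _ b (-g) (by simp [hgb]) j

lemma minorsIdeal_submatrix_equiv {m : Type*} (e : m ≃ n) (M : Matrix n n R) (j : ℕ) :
    minorsIdeal (M.submatrix e e) j = minorsIdeal M j := by
  unfold minorsIdeal
  congr 1
  ext x
  constructor
  · rintro ⟨r, c, hr, hc, rfl⟩
    exact ⟨e ∘ r, e ∘ c, e.injective.comp hr, e.injective.comp hc, by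
      rw [Matrix.submatrix_submatrix]⟩
  · rintro ⟨r, c, hr, hc, rfl⟩
    refine ⟨e.symm ∘ r, e.symm ∘ c, e.symm.injective.comp hr, e.symm.injective.comp hc, ?_⟩
    have h1 : (⇑e ∘ ⇑e.symm ∘ r) = r := by funext i; simp
    have h2 : (⇑e ∘ ⇑e.symm ∘ c) = c := by funext i; simp
    rw [Matrix.submatrix_submatrix, h1, h2]

end Aux

/-- Variables: `z_1, …, z_a` (left), `y` (middle), `x_1, …, x_d` (right). -/
abbrev LVar (a d : ℕ) := Fin a ⊕ Unit ⊕ Fin d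

noncomputable def lambdaDX (a d : ℕ) :
    Matrix (Fin a ⊕ Unit ⊕ Fin d) (Fin a ⊕ Unit ⊕ Fin d) (MvPolynomial (LVar a d) ℤ) :=
  Matrix.of fun p q =>
    match p, q with
    | .inl i, .inl j => if i = j then X (.inl i) else 1
    | .inl _, .inr (.inl _) => 1
    | .inl _, .inr (.inr _) => 2
    | .inr (.inl _), .inl _ => 2
    | .inr (.inl _), .inr (.inl _) => X (.inr (.inl ()))
    | .inr (.inl _), .inr (.inr _) => 1
    | .inr (.inr _), .inl _ => 1
    | .inr (.inr _), .inr (.inl _) => 1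
    | .inr (.inr i), .inr (.inr j) => if i = j then X (.inr (.inr i)) else 2

noncomputable def Lmatrix (a d : ℕ) :
    Matrix (Unit ⊕ Fin a ⊕ Fin d) (Unit ⊕ Fin a ⊕ Fin d) (MvPolynomial (LVar a d) ℤ) :=
  Matrix.of fun p q =>
    match p, q with
    | .inl _, .inl _ => X (.inr (.inl ()))
    | .inl _, .inr (.inl _) => 2 - X (.inr (.inl ()))
    | .inl _, .inr (.inr _) => 1 - 2 * X (.inr (.inl ()))
    | .inr (.inl _), .inl _ => 1
    | .inr (.inl k), .inr (.inl k') => if k = k' then X (.inl k) - 1 else 0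
    | .inr (.inl _), .inr (.inr _) => 0
    | .inr (.inr _), .inl _ => 1
    | .inr (.inr _), .inr (.inl _) => 0
    | .inr (.inr t), .inr (.inr t') => if t = t' then X (.inr (.inr t)) - 2 else 0

/-- The reindexing equivalence. -/
def lEquiv (a d : ℕ) : (Unit ⊕ Fin a ⊕ Fin d) ≃ (Fin a ⊕ Unit ⊕ Fin d) where
  toFun p := match p with
    | .inl _ => .inr (.inl ())
    | .inr (.inl k) => .inl k
    | .inr (.inr t) => .inr (.inr t)
  invFun p := match p with
    | .inl k => .inr (.inl k)
    | .inr (.inl _) => .inl ()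
    | .inr (.inr t) => .inr (.inr t)
  left_inv p := by rcases p with _ | (k | t) <;> rfl
  right_inv p := by rcases p with k | (_ | t) <;> rfl

/-- The coefficient function for the column operations. -/
noncomputable def gfun (a d : ℕ) : (Unit ⊕ Fin a ⊕ Fin d) → MvPolynomial (LVar a d) ℤ
  | .inl _ => 0
  | .inr (.inl _) => -1
  | .inr (.inr _) => -2

lemma Lmatrix_eq (a d : ℕ) :
    Lmatrix a d = ((lambdaDX a d).submatrix (lEquiv a d) (lEquiv a d)) *
      Cmat (Sum.inl ()) (gfun a d) := by
  ext p q
  rw [mul_Cmat_apply]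
  rcases p with _ | (k | t) <;> rcases q with _ | (k' | t') <;>
    · simp only [Lmatrix, lambdaDX, lEquiv, gfun, Matrix.submatrix_apply, Matrix.of_apply,
        Equiv.coe_fn_mk]
      first
      | (split <;> ring)
      | ring

theorem minors_ideals_lambda_a10d_eq_L (a d : ℕ) :
    ∀ j : ℕ, 1 ≤ j → j ≤ a + d + 1 →
      minorsIdeal (lambdaDX a d) j = minorsIdeal (Lmatrix a d) j := by
  intro j _ _
  rw [Lmatrix_eq,
    minorsIdeal_mul_Cmat _ (Sum.inl ()) (gfun a d) (show gfun a d (Sum.inl ()) = 0 from rfl) j,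
    minorsIdeal_submatrix_equiv]
end

section
/- Let a, d ≥ 0 be integers, n = a+d+1, and R = ℤ[z_1,…,z_a, y, x_1,…,x_d]. Let M = D_X(Λ(a,1,0,d)) be the n×n matrix over R with rows and columns indexed by K ⊔ {•} ⊔ T (|K| = a, |T| = d): diagonal entries z_1,…,z_a on K, y at •, and x_1,…,x_d on T; off-diagonal entries: 1 between two distinct K-indices, 1 from a K-index to •, 2 from a K-index to a T-index, 2 from • to every K-index, 1 from • to every T-index, 1 from a T-index to every K-index, 1 from a T-index to •, and 2 between two distinct T-indices. Then det(M) = y·∏_{r=1}^{d}(x_r − 2)·∏_{s=1}^{a}(z_s − 1) − Σ_{r=1}^{d} (1 − 2y)·(∏_{r' ≠ r}(x_{r'} − 2))·∏_{s=1}^{a}(z_s − 1) − Σ_{s=1}^{a} (2 − y)·∏_{r=1}^{d}(x_r − 2)·(∏_{s' ≠ s}(z_{s'} − 1)). -/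
set_option maxHeartbeats 1000000
set_option synthInstance.maxHeartbeats 400000

open MvPolynomial Finset

namespace LambdaAux

variable (a d : ℕ)

abbrev Rp (a d : ℕ) := MvPolynomial (LVar a d ⊕ Unit) ℤ
abbrev Ff (a d : ℕ) := FractionRing (Rp a d)

noncomputable def φ : MvPolynomial (LVar a d) ℤ →+* Ff a d :=
  (algebraMap (Rp a d) (Ff a d)).comp (rename Sum.inl).toRingHom

lemma φ_inj : Function.Injective (φ a d) :=
  (IsFractionRing.injective (Rp a d) (Ff a d)).comp
    (rename_injective _ Sum.inl_injective)

noncomputable def Wv : Ff a d := algebraMap (Rp a d) _ (X (Sum.inr ()))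
noncomputable def Yv : Ff a d := algebraMap (Rp a d) _ (X (Sum.inl (Sum.inr (Sum.inl ()))))
noncomputable def Zv (s : Fin a) : Ff a d := algebraMap (Rp a d) _ (X (Sum.inl (Sum.inl s)))
noncomputable def Xv (r : Fin d) : Ff a d := algebraMap (Rp a d) _ (X (Sum.inl (Sum.inr (Sum.inr r))))

noncomputable def dv : LVar a d → Ff a d
  | .inl s => Zv a d s - 1
  | .inr (.inl _) => Wv a d
  | .inr (.inr r) => Xv a d r - 2

lemma dv_ne_zero (q : LVar a d) : dv a d q ≠ 0 := by
  have hinj := IsFractionRing.injective (Rp a d) (Ff a d)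
  rcases q with s | u | r
  · show Zv a d s - 1 ≠ 0
    rw [Zv, show (1 : Ff a d) = algebraMap (Rp a d) _ 1 from (map_one _).symm,
      ← map_sub, (map_ne_zero_iff _ hinj)]
    intro h
    have := congrArg constantCoeff h
    simp [map_ofNat] at this
  · show Wv a d ≠ 0
    rw [Wv, (map_ne_zero_iff _ hinj)]
    exact X_ne_zero _
  · show Xv a d r - 2 ≠ 0
    rw [Xv, show (2 : Ff a d) = algebraMap (Rp a d) _ 2 from (map_ofNat _ 2).symm,
      ← map_sub, (map_ne_zero_iff _ hinj)]
    intro h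
    have := congrArg constantCoeff h
    simp [map_ofNat] at this

noncomputable def u0 : LVar a d → Ff a d
  | .inl _ => 1
  | .inr (.inl _) => 0
  | .inr (.inr _) => 1

noncomputable def u1 : LVar a d → Ff a d
  | .inl _ => 0
  | .inr (.inl _) => 1
  | .inr (.inr _) => 0

noncomputable def r0 : LVar a d → Ff a d
  | .inl _ => 1
  | .inr (.inl _) => 1
  | .inr (.inr _) => 2

noncomputable def r1 : LVar a d → Ff a d
  | .inl _ => 2
  | .inr (.inl _) => Yv a d - Wv a d
  | .inr (.inr _) => 1

noncomputable def Dm : Matrix (LVar a d) (LVar a d) (Ff a d) := Matrix.diagonal (dv a d)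
noncomputable def Em : Matrix (LVar a d) (LVar a d) (Ff a d) :=
  Matrix.diagonal (fun q => (dv a d q)⁻¹)
noncomputable def Um : Matrix (LVar a d) (Fin 2) (Ff a d) :=
  Matrix.of fun q => ![u0 a d q, u1 a d q]
noncomputable def Vm : Matrix (Fin 2) (LVar a d) (Ff a d) :=
  Matrix.of ![r0 a d, r1 a d]

lemma decomp : (lambdaDX a d).map (φ a d) = Dm a d + Um a d * Vm a d := by
  ext p q
  rcases p with s | u | r <;> rcases q with s' | u' | r'
  · rcases eq_or_ne s s' with h | h <;>
      simp [lambdaDX, Dm, Em, Um, Vm, u0, u1, r0, r1, dv, Matrix.mul_apply,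
      Fin.sum_univ_two, Matrix.diagonal, Matrix.map_apply, φ, Wv, Yv, Zv, Xv,
      Matrix.one_apply, map_ofNat, h] <;> ring
  all_goals try (simp [lambdaDX, Dm, Em, Um, Vm, u0, u1, r0, r1, dv, Matrix.mul_apply,
      Fin.sum_univ_two, Matrix.diagonal, Matrix.map_apply, φ, Wv, Yv, Zv, Xv,
      Matrix.one_apply, map_ofNat] <;> ring)
  · rcases eq_or_ne r r' with h | h <;>
      simp [lambdaDX, Dm, Em, Um, Vm, u0, u1, r0, r1, dv, Matrix.mul_apply,
      Fin.sum_univ_two, Matrix.diagonal, Matrix.map_apply, φ, Wv, Yv, Zv, Xv,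
      Matrix.one_apply, map_ofNat, h] <;> ring

lemma det_eq : ((lambdaDX a d).map (φ a d)).det =
    (Dm a d).det * (1 + Vm a d * (Em a d * Um a d)).det := by
  have hDE : Dm a d * Em a d = 1 := by
    rw [Dm, Em, Matrix.diagonal_mul_diagonal]
    rw [show ((fun q => dv a d q * (dv a d q)⁻¹) : LVar a d → Ff a d) = fun _ => 1 from
      funext fun q => mul_inv_cancel₀ (dv_ne_zero a d q)]
    exact Matrix.diagonal_one
  have : Dm a d + Um a d * Vm a d = Dm a d * (1 + (Em a d * Um a d) * Vm a d) := by
    rw [Matrix.mul_add, Matrix.mul_one, ← Matrix.mul_assoc, ← Matrix.mul_assoc, hDE,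
      Matrix.one_mul]
  rw [decomp, this, Matrix.det_mul, Matrix.det_one_add_mul_comm]

noncomputable def SZ : Ff a d := ∑ s : Fin a, (Zv a d s - 1)⁻¹
noncomputable def SX : Ff a d := ∑ r : Fin d, (Xv a d r - 2)⁻¹

lemma EU : Em a d * Um a d = Matrix.of fun q j => (dv a d q)⁻¹ * Um a d q j := by
  ext q j
  simp [Em, Matrix.diagonal_mul]

lemma G00 : (Vm a d * (Em a d * Um a d)) 0 0 = SZ a d + 2 * SX a d := by
  rw [EU, Matrix.mul_apply, Fintype.sum_sum_type, Fintype.sum_sum_type]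
  simp [Vm, Um, u0, u1, r0, r1, dv, SZ, SX, Finset.mul_sum, mul_comm]

lemma G01 : (Vm a d * (Em a d * Um a d)) 0 1 = (Wv a d)⁻¹ := by
  rw [EU, Matrix.mul_apply, Fintype.sum_sum_type, Fintype.sum_sum_type]
  simp [Vm, Um, u0, u1, r0, r1, dv]

lemma G10 : (Vm a d * (Em a d * Um a d)) 1 0 = 2 * SZ a d + SX a d := by
  rw [EU, Matrix.mul_apply, Fintype.sum_sum_type, Fintype.sum_sum_type]
  simp [Vm, Um, u0, u1, r0, r1, dv, SZ, SX, Finset.mul_sum, mul_comm]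

lemma G11 : (Vm a d * (Em a d * Um a d)) 1 1 = (Yv a d - Wv a d) * (Wv a d)⁻¹ := by
  rw [EU, Matrix.mul_apply, Fintype.sum_sum_type, Fintype.sum_sum_type]
  simp [Vm, Um, u0, u1, r0, r1, dv, mul_comm]

lemma det_Dm : (Dm a d).det =
    (∏ s : Fin a, (Zv a d s - 1)) * (Wv a d * ∏ r : Fin d, (Xv a d r - 2)) := by
  rw [Dm, Matrix.det_diagonal, Fintype.prod_sum_type, Fintype.prod_sum_type]
  simp [dv]

lemma det_G : (1 + Vm a d * (Em a d * Um a d)).det =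
    (1 + (SZ a d + 2 * SX a d)) * (1 + (Yv a d - Wv a d) * (Wv a d)⁻¹) -
      (Wv a d)⁻¹ * (2 * SZ a d + SX a d) := by
  rw [Matrix.det_fin_two]
  simp only [Matrix.add_apply, Matrix.one_apply]
  rw [G00, G01, G10, G11]
  norm_num

lemma key {F : Type*} [Field F] {a d : ℕ} (W Y : F) (Z : Fin a → F) (Xx : Fin d → F)
    (hW : W ≠ 0) (hZ : ∀ s, Z s ≠ 0) (hX : ∀ r, Xx r ≠ 0) :
    ((∏ s, Z s) * (W * ∏ r, Xx r)) *
      ((1 + ((∑ s, (Z s)⁻¹) + 2 * ∑ r, (Xx r)⁻¹)) * (1 + (Y - W) * W⁻¹)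
        - W⁻¹ * (2 * (∑ s, (Z s)⁻¹) + ∑ r, (Xx r)⁻¹))
    = Y * (∏ r, Xx r) * (∏ s, Z s)
      - (∑ r, (1 - 2 * Y) * (∏ r' ∈ univ.erase r, Xx r') * (∏ s, Z s))
      - (∑ s, (2 - Y) * (∏ r, Xx r) * (∏ s' ∈ univ.erase s, Z s')) := by
  have eZ : (∏ s, Z s) * (∑ s, (Z s)⁻¹) = ∑ s, ∏ s' ∈ univ.erase s, Z s' := by
    rw [Finset.mul_sum]
    refine Finset.sum_congr rfl fun s _ => ?_
    rw [← Finset.mul_prod_erase univ Z (mem_univ s), mul_comm (Z s), mul_assoc,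
      mul_inv_cancel₀ (hZ s), mul_one]
  have eX : (∏ r, Xx r) * (∑ r, (Xx r)⁻¹) = ∑ r, ∏ r' ∈ univ.erase r, Xx r' := by
    rw [Finset.mul_sum]
    refine Finset.sum_congr rfl fun r _ => ?_
    rw [← Finset.mul_prod_erase univ Xx (mem_univ r), mul_comm (Xx r), mul_assoc,
      mul_inv_cancel₀ (hX r), mul_one]
  have t1 : (∑ r, (1 - 2 * Y) * (∏ r' ∈ univ.erase r, Xx r') * (∏ s, Z s)) =
      -((2 * Y - 1) * (∏ s, Z s) * ((∏ r, Xx r) * (∑ r, (Xx r)⁻¹))) := by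
    rw [eX, Finset.mul_sum, ← Finset.sum_neg_distrib]
    exact Finset.sum_congr rfl fun r _ => by ring
  have t2 : (∑ s, (2 - Y) * (∏ r, Xx r) * (∏ s' ∈ univ.erase s, Z s')) =
      -((Y - 2) * (∏ r, Xx r) * ((∏ s, Z s) * (∑ s, (Z s)⁻¹))) := by
    rw [eZ, Finset.mul_sum, ← Finset.sum_neg_distrib]
    exact Finset.sum_congr rfl fun s _ => by ring
  rw [t1, t2]
  field_simp
  ring

end LambdaAux

theorem det_lambdaDX_a10d (a d : ℕ) :
    (lambdaDX a d).det =
      X (.inr (.inl ())) * (∏ r : Fin d, (X (.inr (.inr r)) - 2)) *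
          (∏ s : Fin a, (X (.inl s) - 1)) -
        (∑ r : Fin d, (1 - 2 * X (.inr (.inl ()))) *
          (∏ r' ∈ Finset.univ.erase r, (X (.inr (.inr r')) - 2)) *
          (∏ s : Fin a, (X (.inl s) - 1))) -
        (∑ s : Fin a, (2 - X (.inr (.inl ()))) *
          (∏ r : Fin d, (X (.inr (.inr r)) - 2)) *
          (∏ s' ∈ Finset.univ.erase s, (X (.inl s') - 1))) := by
  open LambdaAux in
  apply φ_inj a d
  rw [RingHom.map_det, RingHom.mapMatrix_apply, det_eq, det_Dm, det_G]
  have hW : Wv a d ≠ 0 := dv_ne_zero a d (Sum.inr (Sum.inl ()))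
  have hZ : ∀ s : Fin a, Zv a d s - 1 ≠ 0 := fun s => dv_ne_zero a d (Sum.inl s)
  have hX : ∀ r : Fin d, Xv a d r - 2 ≠ 0 := fun r => dv_ne_zero a d (Sum.inr (Sum.inr r))
  rw [SZ, SX, key (Wv a d) (Yv a d) _ _ hW hZ hX]
  simp [map_sub, map_mul, map_add, map_sum, map_prod, map_ofNat, φ, Wv, Yv, Zv, Xv]
end

section
/- Let a ≥ 0 and d ≥ 2 be integers and n = a+d+1. Let D(Λ(a,1,0,d)) be the n×n integer matrix with rows and columns indexed by K ⊔ {•} ⊔ T (|K| = a, |T| = d), with all diagonal entries 0 and off-diagonal entries: 1 between two distinct K-indices, 1 from a K-index to •, 2 from a K-index to a T-index, 2 from • to every K-index, 1 from • to every T-index, 1 from a T-index to every K-index, 1 from a T-index to •, and 2 between two distinct T-indices. Then D(Λ(a,1,0,d)) is equivalent over ℤ to the diagonal matrix with a+2 diagonal entries equal to 1, followed by d−2 diagonal entries equal to 2, followed by one diagonal entry equal to 8a + 2d. -/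
/-- Two square integer matrices are equivalent over ℤ if one is obtained from the
other by multiplying on the left and right by matrices invertible over ℤ. -/
def IntEquiv {m : Type*} [Fintype m] [DecidableEq m] (M N : Matrix m m ℤ) : Prop :=
  ∃ P Q : Matrix m m ℤ, IsUnit P.det ∧ IsUnit Q.det ∧ P * M * Q = N

/-- The distance matrix `D(Λ(a,1,0,d))`, with rows and columns indexed by
`K ⊔ {•} ⊔ T`: indices `< a` form `K`, index `a` is `•`, and indices `> a` form `T`. -/
def lambdaD (a d : ℕ) : Matrix (Fin (a + d + 1)) (Fin (a + d + 1)) ℤ :=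
  Matrix.of fun i j =>
    if i = j then 0
    else if i.val < a then (if j.val < a then 1 else if j.val = a then 1 else 2)
    else if i.val = a then (if j.val < a then 2 else 1)
    else (if j.val < a then 1 else if j.val = a then 1 else 2)

/-!
Fix `t₁ = a + 1` and `t₀ = a + d` in `T` and split the indices into the blocks `K, •, t₁, T', t₀`,
where `T' = T \ {t₁, t₀}`. Every matrix met in the reduction is constant on products of blocks,
up to a diagonal term depending only on the block. Such matrices multiply like their `5 × 5`
tables weighted by the block sizes `a, 1, 1, d - 2, 1`, so row and column operations that are
uniform on blocks become `5 × 5` computations.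

Subtracting row `t₀` from every row except `•` leaves pivots `-1` on `K` and turns column `•` into
the unit vector at `t₀`. Clearing against these pivots collects `1 + 4a + (d - 1) = 4a + d` in the
entry `(•, t₀)`; the pivot `1` at `(•, t₁)` then carries twice that, `8a + 2d`, to `(t₁, t₀)`, while
the rows of `T'` become `-2` times unit vectors. A signed permutation cycling `•, t₁, t₀` gives the
diagonal.
-/

open Matrix Finset

infix:50 " ∼ℤ " => IntEquiv

namespace IntEquiv

variable {m : Type*} [Fintype m] [DecidableEq m] {M N O : Matrix m m ℤ}

theorem trans (h₁ : M ∼ℤ N) (h₂ : N ∼ℤ O) : M ∼ℤ O := by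
  obtain ⟨P₁, Q₁, hP₁, hQ₁, rfl⟩ := h₁
  obtain ⟨P₂, Q₂, hP₂, hQ₂, rfl⟩ := h₂
  refine ⟨P₂ * P₁, Q₁ * Q₂, ?_, ?_, ?_⟩
  · simpa only [det_mul] using hP₂.mul hP₁
  · simpa only [det_mul] using hQ₁.mul hQ₂
  · simp only [Matrix.mul_assoc]

instance : Trans (IntEquiv (m := m)) (IntEquiv (m := m)) (IntEquiv (m := m)) := ⟨trans⟩

theorem of_mul_left {E : Matrix m m ℤ} (hE : IsUnit E.det) (h : E * M = N) : M ∼ℤ N :=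
  ⟨E, 1, hE, by simp, by rw [Matrix.mul_one, h]⟩

theorem of_mul_right {E : Matrix m m ℤ} (hE : IsUnit E.det) (h : M * E = N) : M ∼ℤ N :=
  ⟨1, E, by simp, hE, by rw [Matrix.one_mul, h]⟩

end IntEquiv

theorem isUnit_det_one_add_vecMulVec {m R : Type*} [Fintype m] [DecidableEq m] [CommRing R]
    {u v : m → R} (h : v ⬝ᵥ u = 0) : IsUnit (1 + vecMulVec u v).det := by
  rw [vecMulVec_eq Unit, det_one_add_replicateCol_mul_replicateRow, h, add_zero]
  exact isUnit_one

theorem Fin.card_filter_le_val_lt (n lo hi : ℕ) :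
    #{i : Fin n | lo ≤ i.val ∧ i.val < hi} = min n hi - lo := by
  rw [← Nat.card_Ico, ← card_map Fin.valEmbedding]
  congr 1
  ext k
  simp only [mem_map, mem_filter, mem_univ, true_and, Fin.valEmbedding_apply, Fin.exists_iff,
    exists_and_left, exists_prop, exists_eq_right_right, mem_Ico, lt_inf_iff]
  omega

section ClassMatrix

variable {ι κ R : Type*} [DecidableEq ι] (cls : ι → κ)

def classMatrix [AddZeroClass R] (f : Matrix κ κ R) (g : κ → R) : Matrix ι ι R :=
  f.submatrix cls cls + diagonal (g ∘ cls)

def classSize [Fintype ι] [DecidableEq κ] (c : κ) : ℕ := #{i | cls i = c}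

section CommSemiring

variable [CommSemiring R]

theorem classMatrix_transpose (f : Matrix κ κ R) (g : κ → R) :
    (classMatrix cls f g)ᵀ = classMatrix cls fᵀ g := by
  rw [classMatrix, classMatrix, transpose_add, transpose_submatrix, diagonal_transpose]

theorem classMatrix_zero_one : classMatrix cls (0 : Matrix κ κ R) 1 = 1 := by
  ext i j
  simp [classMatrix, one_apply]

theorem classMatrix_vecMulVec_one (u v : κ → R) :
    classMatrix cls (vecMulVec u v) 1 = 1 + vecMulVec (u ∘ cls) (v ∘ cls) := by
  rw [classMatrix, add_comm]
  rfl

variable [Fintype ι] [Fintype κ] [DecidableEq κ]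

omit [DecidableEq ι] in
theorem submatrix_mul_submatrix_classSize (f f' : Matrix κ κ R) :
    f.submatrix cls cls * f'.submatrix cls cls =
      (f * diagonal (fun c => (classSize cls c : R)) * f').submatrix cls cls := by
  ext i j
  simp only [submatrix_apply, mul_apply, diagonal_apply, mul_ite, mul_zero, Finset.sum_ite_eq',
    Finset.mem_univ, if_true]
  rw [← Finset.sum_fiberwise' univ cls (fun c => f (cls i) c * f' c (cls j))]
  refine Finset.sum_congr rfl fun c _ => ?_
  rw [Finset.sum_const, nsmul_eq_mul, classSize]
  ring

theorem classMatrix_mul (f f' : Matrix κ κ R) (g g' : κ → R) :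
    classMatrix cls f g * classMatrix cls f' g' =
      classMatrix cls (f * diagonal (fun c => (classSize cls c : R)) * f' + f * diagonal g' +
        diagonal g * f') (g * g') := by
  simp only [classMatrix, Matrix.add_mul, Matrix.mul_add, submatrix_mul_submatrix_classSize,
    diagonal_mul_diagonal]
  ext i j
  simp only [Matrix.add_apply, submatrix_apply, mul_diagonal, diagonal_mul, diagonal_apply,
    Function.comp_apply, Pi.mul_apply]
  ring

end CommSemiring

theorem isUnit_det_classMatrix_vecMulVec_one [Fintype ι] [CommRing R] {u v : κ → R}
    (hvu : ∀ c, v c * u c = 0) : IsUnit (classMatrix cls (vecMulVec u v) 1).det := by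
  rw [classMatrix_vecMulVec_one]
  exact isUnit_det_one_add_vecMulVec (Finset.sum_eq_zero fun i _ => hvu (cls i))

end ClassMatrix

section ClassOperations

variable {ι κ : Type*} [Fintype ι] [DecidableEq ι] [Fintype κ] [DecidableEq κ] {cls : ι → κ}
  {s : κ → ℤ} (hs : (fun c => (classSize cls c : ℤ)) = s)
include hs

/-- The row operation `1 + vecMulVec (u ∘ cls) (v ∘ cls)` adds to each row of block `c` the
`u c`-multiple of the `v`-weighted sum of all rows. -/
theorem IntEquiv.classMatrix_rowOp (u v : κ → ℤ) (hvu : ∀ c, v c * u c = 0)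
    {f f' : Matrix κ κ ℤ} {g : κ → ℤ}
    (h : f + vecMulVec u (v ᵥ* (diagonal s * f + diagonal g)) = f') :
    classMatrix cls f g ∼ℤ classMatrix cls f' g := by
  refine IntEquiv.of_mul_left (isUnit_det_classMatrix_vecMulVec_one cls hvu) ?_
  rw [classMatrix_mul, hs, one_mul, ← h, Pi.one_def, diagonal_one, Matrix.one_mul, Matrix.mul_assoc,
    vecMulVec_mul, vecMulVec_mul, ← vecMulVec_add, ← vecMul_add, add_comm]

/-- The column operation `1 + vecMulVec (u ∘ cls) (v ∘ cls)` adds to each column of block `c` the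
`v c`-multiple of the `u`-weighted sum of all columns. -/
theorem IntEquiv.classMatrix_colOp (u v : κ → ℤ) (hvu : ∀ c, v c * u c = 0)
    {f f' : Matrix κ κ ℤ} {g : κ → ℤ}
    (h : f + vecMulVec ((f * diagonal s + diagonal g) *ᵥ u) v = f') :
    classMatrix cls f g ∼ℤ classMatrix cls f' g := by
  refine IntEquiv.of_mul_right (isUnit_det_classMatrix_vecMulVec_one cls hvu) ?_
  rw [classMatrix_mul, hs, mul_one, ← h, Pi.one_def, diagonal_one, Matrix.mul_one, mul_vecMulVec,
    mul_vecMulVec, add_mulVec, add_vecMulVec]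
  congr 1
  abel

end ClassOperations

/-- Blocks `0, …, 4` are `K`, `•`, `t₁ = a + 1`, `T \ {t₁, t₀}` and `t₀ = a + d`. -/
def lambdaClass (a d : ℕ) (i : Fin (a + d + 1)) : Fin 5 :=
  if i.val < a then 0 else if i.val = a then 1 else if i.val = a + 1 then 2
  else if i.val < a + d then 3 else 4

theorem classSize_lambdaClass (a : ℕ) {d : ℕ} (hd : 2 ≤ d) :
    (fun c => (classSize (lambdaClass a d) c : ℤ)) = ![(a : ℤ), 1, 1, (d : ℤ) - 2, 1] := by
  have fiber : ∀ c lo hi, (∀ i : Fin (a + d + 1), lambdaClass a d i = c ↔ lo ≤ i.val ∧ i.val < hi) →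
      classSize (lambdaClass a d) c = min (a + d + 1) hi - lo := fun c lo hi h => by
    rw [classSize, filter_congr fun i _ => h i, Fin.card_filter_le_val_lt]
  have h0 := fiber 0 0 a fun i => by
    unfold lambdaClass; split_ifs <;> simp <;> omega
  have h1 := fiber 1 a (a + 1) fun i => by
    unfold lambdaClass; split_ifs <;> simp <;> omega
  have h2 := fiber 2 (a + 1) (a + 2) fun i => by
    unfold lambdaClass; split_ifs <;> simp <;> omega
  have h3 := fiber 3 (a + 2) (a + d) fun i => by
    unfold lambdaClass; split_ifs <;> simp <;> omega
  have h4 := fiber 4 (a + d) (a + d + 1) fun i => by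
    unfold lambdaClass; split_ifs <;> simp <;> omega
  funext c
  fin_cases c <;> simp [h0, h1, h2, h3, h4] <;> omega

theorem lambdaD_eq_classMatrix (a d : ℕ) :
    lambdaD a d = classMatrix (lambdaClass a d)
      !![1, 1, 2, 2, 2;
         2, 0, 1, 1, 1;
         1, 1, 0, 2, 2;
         1, 1, 2, 2, 2;
         1, 1, 2, 2, 0] ![-1, 0, 0, -2, 0] := by
  ext i j
  simp only [lambdaD, classMatrix, lambdaClass, of_apply, Matrix.add_apply, submatrix_apply,
    diagonal_apply, Function.comp_apply, Fin.ext_iff]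
  split_ifs <;> simp <;> omega

theorem diagonal_eq_classMatrix_lambdaClass (a d : ℕ) :
    (diagonal fun i : Fin (a + d + 1) =>
        if i.val < a + 2 then (1 : ℤ) else if i.val < a + d then 2 else 8 * a + 2 * d) =
      classMatrix (lambdaClass a d) (diagonal ![0, 1, 1, 0, 8 * (a : ℤ) + 2 * d])
        ![1, 0, 0, 2, 0] := by
  ext i j
  simp only [classMatrix, lambdaClass, Matrix.add_apply, submatrix_apply, diagonal_apply,
    Function.comp_apply, Fin.ext_iff]
  split_ifs <;> simp <;> omega

theorem lambdaClassMatrix_clear_K {a d : ℕ} (hd : 2 ≤ d) :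
    classMatrix (lambdaClass a d)
        !![1, 1, 2, 2, 2;
           2, 0, 1, 1, 1;
           1, 1, 0, 2, 2;
           1, 1, 2, 2, 2;
           1, 1, 2, 2, 0] ![-1, 0, 0, -2, 0] ∼ℤ
      classMatrix (lambdaClass a d)
        !![0, 0, 0, 0, 0;
           0, 0, 1, 1, 4 * a + d;
           0, 0, -2, 0, 0;
           0, 0, 0, 0, 0;
           0, 1, 0, 0, 0] ![-1, 0, 0, -2, 0] := by
  have hs := classSize_lambdaClass a hd
  calc _ ∼ℤ classMatrix (lambdaClass a d)
        !![0, 0, 0, 0, 2;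
           2, 0, 1, 1, 1;
           0, 0, -2, 0, 2;
           0, 0, 0, 0, 2;
           1, 1, 2, 2, 0] ![-1, 0, 0, -2, 0] :=
      IntEquiv.classMatrix_rowOp hs ![-1, 0, -1, -1, 0] ![0, 0, 0, 0, 1] (by decide) (by
        ext c c'
        simp only [Matrix.add_apply, vecMulVec_apply, vecMul, dotProduct, Fin.sum_univ_five,
          mul_apply, diagonal_apply]
        fin_cases c <;> fin_cases c' <;> simp)
    _ ∼ℤ classMatrix (lambdaClass a d)
        !![0, 0, 0, 0, 2;
           2, 0, 1, 1, 1;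
           0, 0, -2, 0, 2;
           0, 0, 0, 0, 2;
           0, 1, 0, 0, 0] ![-1, 0, 0, -2, 0] :=
      IntEquiv.classMatrix_colOp hs ![0, 1, 0, 0, 0] ![-1, 0, -2, -2, 0] (by decide) (by
        ext c c'
        simp only [Matrix.add_apply, vecMulVec_apply, mulVec, dotProduct, Fin.sum_univ_five,
          mul_apply, diagonal_apply]
        fin_cases c <;> fin_cases c' <;> simp)
    _ ∼ℤ classMatrix (lambdaClass a d)
        !![0, 0, 0, 0, 0;
           2, 0, 1, 1, 4 * a + d;
           0, 0, -2, 0, 0;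
           0, 0, 0, 0, 0;
           0, 1, 0, 0, 0] ![-1, 0, 0, -2, 0] :=
      IntEquiv.classMatrix_colOp hs ![2, 0, 1, 1, 0] ![0, 0, 0, 0, 1] (by decide) (by
        ext c c'
        simp only [Matrix.add_apply, vecMulVec_apply, mulVec, dotProduct, Fin.sum_univ_five,
          mul_apply, diagonal_apply]
        fin_cases c <;> fin_cases c' <;> simp
        ring)
    _ ∼ℤ classMatrix (lambdaClass a d)
        !![0, 0, 0, 0, 0;
           0, 0, 1, 1, 4 * a + d;
           0, 0, -2, 0, 0;
           0, 0, 0, 0, 0;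
           0, 1, 0, 0, 0] ![-1, 0, 0, -2, 0] :=
      IntEquiv.classMatrix_rowOp hs ![0, 1, 0, 0, 0] ![2, 0, 0, 0, 0] (by decide) (by
        ext c c'
        simp only [Matrix.add_apply, vecMulVec_apply, vecMul, dotProduct, Fin.sum_univ_five,
          mul_apply, diagonal_apply]
        fin_cases c <;> fin_cases c' <;> simp)

theorem lambdaClassMatrix_clear_T {a d : ℕ} (hd : 2 ≤ d) :
    classMatrix (lambdaClass a d)
        !![0, 0, 0, 0, 0;
           0, 0, 1, 1, 4 * a + d;
           0, 0, -2, 0, 0;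
           0, 0, 0, 0, 0;
           0, 1, 0, 0, 0] ![-1, 0, 0, -2, 0] ∼ℤ
      classMatrix (lambdaClass a d)
        !![0, 0, 0, 0, 0;
           0, 0, 1, 0, 0;
           0, 0, 0, 0, 8 * a + 2 * d;
           0, 0, 0, 0, 0;
           0, 1, 0, 0, 0] ![-1, 0, 0, -2, 0] := by
  have hs := classSize_lambdaClass a hd
  calc _ ∼ℤ classMatrix (lambdaClass a d)
        !![0, 0, 0, 0, 0;
           0, 0, 1, 0, 0;
           0, 0, -2, 2, 8 * a + 2 * d;
           0, 0, 0, 0, 0;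
           0, 1, 0, 0, 0] ![-1, 0, 0, -2, 0] :=
      IntEquiv.classMatrix_colOp hs ![0, 0, 1, 0, 0] ![0, 0, 0, -1, -(4 * a + d : ℤ)]
        (fun c => by fin_cases c <;> simp) (by
        ext c c'
        simp only [Matrix.add_apply, vecMulVec_apply, mulVec, dotProduct, Fin.sum_univ_five,
          mul_apply, diagonal_apply]
        fin_cases c <;> fin_cases c' <;> simp
        ring)
    _ ∼ℤ classMatrix (lambdaClass a d)
        !![0, 0, 0, 0, 0;
           0, 0, 1, 0, 0;
           0, 0, 0, 0, 8 * a + 2 * d;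
           0, 0, 0, 0, 0;
           0, 1, 0, 0, 0] ![-1, 0, 0, -2, 0] :=
      IntEquiv.classMatrix_rowOp hs ![0, 0, 1, 0, 0] ![0, 2, 0, 1, 0] (by decide) (by
        ext c c'
        simp only [Matrix.add_apply, vecMulVec_apply, vecMul, dotProduct, Fin.sum_univ_five,
          mul_apply, diagonal_apply]
        fin_cases c <;> fin_cases c' <;> simp)

/-- Negates the rows of `K` and `T \ {t₁, t₀}` and moves the rows `t₀, •, t₁` to `•, t₁, t₀`. -/
def lambdaSignedCycle (a d : ℕ) : Matrix (Fin (a + d + 1)) (Fin (a + d + 1)) ℤ :=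
  classMatrix (lambdaClass a d)
    !![0, 0, 0, 0, 0;
       0, -1, 0, 0, 1;
       0, 1, -1, 0, 0;
       0, 0, 0, 0, 0;
       0, 0, 1, 0, -1] ![-1, 1, 1, -1, 1]

theorem lambdaSignedCycle_mul_transpose (a : ℕ) {d : ℕ} (hd : 2 ≤ d) :
    lambdaSignedCycle a d * (lambdaSignedCycle a d)ᵀ = 1 := by
  rw [lambdaSignedCycle, classMatrix_transpose, classMatrix_mul, classSize_lambdaClass a hd,
    ← classMatrix_zero_one (lambdaClass a d)]
  congr 1
  · ext c c'
    simp only [Matrix.add_apply, mul_apply, Fin.sum_univ_five, diagonal_apply, transpose_apply]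
    fin_cases c <;> fin_cases c' <;> simp
  · funext c
    fin_cases c <;> simp

theorem lambdaClassMatrix_permute {a d : ℕ} (hd : 2 ≤ d) :
    classMatrix (lambdaClass a d)
        !![0, 0, 0, 0, 0;
           0, 0, 1, 0, 0;
           0, 0, 0, 0, 8 * a + 2 * d;
           0, 0, 0, 0, 0;
           0, 1, 0, 0, 0] ![-1, 0, 0, -2, 0] ∼ℤ
      classMatrix (lambdaClass a d) (diagonal ![0, 1, 1, 0, 8 * (a : ℤ) + 2 * d])
        ![1, 0, 0, 2, 0] := by
  refine IntEquiv.of_mul_left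
    (isUnit_det_of_right_inverse (lambdaSignedCycle_mul_transpose a hd)) ?_
  rw [lambdaSignedCycle, classMatrix_mul, classSize_lambdaClass a hd]
  congr 1
  · ext c c'
    simp only [Matrix.add_apply, mul_apply, Fin.sum_univ_five, diagonal_apply]
    fin_cases c <;> fin_cases c' <;> simp
  · funext c
    fin_cases c <;> simp

theorem snf_lambdaD_a10d (a d : ℕ) (hd : 2 ≤ d) :
    IntEquiv (lambdaD a d)
      (Matrix.diagonal fun i : Fin (a + d + 1) =>
        if i.val < a + 2 then (1 : ℤ)
        else if i.val < a + d then 2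
        else 8 * a + 2 * d) := by
  rw [lambdaD_eq_classMatrix, diagonal_eq_classMatrix_lambdaClass]
  calc _ ∼ℤ _ := lambdaClassMatrix_clear_K hd
    _ ∼ℤ _ := lambdaClassMatrix_clear_T hd
    _ ∼ℤ _ := lambdaClassMatrix_permute hd
end
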